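/- Let ρ ⊆ X × Y be a relation between metric spaces such that dom ρ is ε-dense in X and im ρ is μ-dense in Y, and let ρ̄ be the relation defined by (x,y) ∈ ρ̄ iff there exists (x',y') ∈ ρ with d(x,x') ≤ ε and D(y,y') ≤ μ. Then |acc(ρ̄) − acc(ρ)| ≤ 2(ε + μ). -/
import Mathlib


open ENNReal

/-- The accuracy of a relation `ρ ⊆ X × Y` between metric spaces. -/
noncomputable def accuracy {X Y : Type*} [MetricSpace X] [MetricSpace Y]
    (ρ : Set (X × Y)) : ℝ≥0∞ :=
  ⨆ p ∈ ρ, ⨆ q ∈ ρ, ENNReal.ofReal |dist p.2 q.2 - dist p.1 q.1|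

/-- The "cartographic generalization" `ρ̄` of a relation `ρ`:
`(x,y) ∈ ρ̄` iff there is `(x',y') ∈ ρ` with `d(x,x') ≤ ε` and `D(y,y') ≤ μ`. -/
def genCart {X Y : Type*} [MetricSpace X] [MetricSpace Y]
    (ρ : Set (X × Y)) (ε μ : ℝ) : Set (X × Y) :=
  {q : X × Y | ∃ p ∈ ρ, dist q.1 p.1 ≤ ε ∧ dist q.2 p.2 ≤ μ}

/-- If `dom ρ` is `ε`-dense in `X` and `im ρ` is `μ`-dense in `Y`, then
`|acc(ρ̄) − acc(ρ)| ≤ 2(ε + μ)`. -/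
theorem accuracy_genCart_close {X Y : Type*} [MetricSpace X] [MetricSpace Y]
    (ρ : Set (X × Y)) (ε μ : ℝ) (hε : 0 ≤ ε) (hμ : 0 ≤ μ)
    (hdom : ∀ u : X, ∃ p ∈ ρ, dist u p.1 ≤ ε)
    (him : ∀ v : Y, ∃ p ∈ ρ, dist v p.2 ≤ μ) :
    accuracy (genCart ρ ε μ) ≤ accuracy ρ + ENNReal.ofReal (2 * (ε + μ)) ∧
    accuracy ρ ≤ accuracy (genCart ρ ε μ) + ENNReal.ofReal (2 * (ε + μ)) := by
  constructor
  · apply iSup₂_le; intro p hp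
    apply iSup₂_le; intro q hq
    obtain ⟨p', hp', hpx, hpy⟩ := hp
    obtain ⟨q', hq', hqx, hqy⟩ := hq
    have h1 : |dist p.1 q.1 - dist p'.1 q'.1| ≤ 2 * ε := by
      have := Real.dist_eq (dist p.1 q.1) (dist p'.1 q'.1) ▸ dist_dist_dist_le p.1 q.1 p'.1 q'.1
      linarith
    have h2 : |dist p.2 q.2 - dist p'.2 q'.2| ≤ 2 * μ := by
      have := Real.dist_eq (dist p.2 q.2) (dist p'.2 q'.2) ▸ dist_dist_dist_le p.2 q.2 p'.2 q'.2
      linarith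
    have key : |dist p.2 q.2 - dist p.1 q.1| ≤
        |dist p'.2 q'.2 - dist p'.1 q'.1| + 2 * (ε + μ) := by
      obtain ⟨a1, a2⟩ := abs_le.mp h1
      obtain ⟨b1, b2⟩ := abs_le.mp h2
      have c1 := le_abs_self (dist p'.2 q'.2 - dist p'.1 q'.1)
      have c2 := neg_abs_le (dist p'.2 q'.2 - dist p'.1 q'.1)
      rw [abs_le]; constructor <;> linarith
    calc ENNReal.ofReal |dist p.2 q.2 - dist p.1 q.1|
        ≤ ENNReal.ofReal (|dist p'.2 q'.2 - dist p'.1 q'.1| + 2 * (ε + μ)) :=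
          ENNReal.ofReal_le_ofReal key
      _ = ENNReal.ofReal |dist p'.2 q'.2 - dist p'.1 q'.1| + ENNReal.ofReal (2 * (ε + μ)) :=
          ENNReal.ofReal_add (abs_nonneg _) (by positivity)
      _ ≤ accuracy ρ + ENNReal.ofReal (2 * (ε + μ)) := by
          gcongr
          exact le_iSup₂_of_le p' hp' (le_iSup₂_of_le q' hq' le_rfl)
  · have hsub : ρ ⊆ genCart ρ ε μ := fun p hp =>
      ⟨p, hp, by simpa using hε, by simpa using hμ⟩
    refine le_trans ?_ (le_add_right le_rfl)
    apply iSup₂_le; intro p hp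
    apply iSup₂_le; intro q hq
    exact le_iSup₂_of_le p (hsub hp) (le_iSup₂_of_le q (hsub hq) le_rfl)
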